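/- For all real 2n×2n matrices A, B and all real anti-symmetric 2n×2n matrices N, R, the Liouvillians of the general quadratic fermion system satisfy [L(A, N), L(B, R)] = L([A, B], AR + R·Aᵀ − BN − N·Bᵀ), where [A,B] = AB − BA is the matrix commutator, Aᵀ the transpose, and [X,Y] = XY − YX the commutator of linear maps on End(F). -/

import Mathlib

open scoped Matrix

open ContinuousLinearMap in
/-- The Liouvillian of the general quadratic fermion system, written with Majorana
operators:
`L(A, N)ρ = (1/4) Σ_{j,k} ( ((A − Aᵀ)_{jk}/2)(w_j w_k ρ − ρ w_j w_k)`
`+ i N_{jk}(w_j w_k ρ + ρ w_j w_k) + (−A − Aᵀ + 2iN)_{jk} w_j ρ w_k )`. -/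
noncomputable def LiouMaj {F : Type*} [NormedAddCommGroup F] [InnerProductSpace ℂ F]
    [FiniteDimensional ℂ F] {n : ℕ} (w : Fin (2 * n) → F →L[ℂ] F)
    (A N : Matrix (Fin (2 * n)) (Fin (2 * n)) ℝ) :
    (F →L[ℂ] F) →L[ℂ] (F →L[ℂ] F) :=
  (4 : ℂ)⁻¹ • ∑ j, ∑ k,
    (((((A - Aᵀ) j k : ℝ) : ℂ) / 2) •
        (mul ℂ (F →L[ℂ] F) (w j * w k) - mulLeftRight ℂ (F →L[ℂ] F) 1 (w j * w k))
      + (Complex.I * ((N j k : ℝ) : ℂ)) •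
        (mul ℂ (F →L[ℂ] F) (w j * w k) + mulLeftRight ℂ (F →L[ℂ] F) 1 (w j * w k))
      + ((((-A - Aᵀ) j k : ℝ) : ℂ) + 2 * Complex.I * ((N j k : ℝ) : ℂ)) •
        mulLeftRight ℂ (F →L[ℂ] F) (w j) (w k))

set_option linter.unusedSectionVars false
set_option linter.unusedVariables false
set_option maxHeartbeats 2000000
open ContinuousLinearMap
open scoped Matrix


namespace Stmt19Aux
variable {ι : Type*} [Fintype ι] [DecidableEq ι]
variable {𝓐 : Type*} [NormedRing 𝓐] [NormedAlgebra ℂ 𝓐]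

theorem mul_eq_mlr (x : 𝓐) : mul ℂ 𝓐 x = mulLeftRight ℂ 𝓐 x 1 := by
  ext y; simp [mulLeftRight_apply]

theorem mlr_sub_one (x y : 𝓐) : mulLeftRight ℂ 𝓐 x 1 - mulLeftRight ℂ 𝓐 y 1
    = mulLeftRight ℂ 𝓐 (x - y) 1 := by
  rw [map_sub, ContinuousLinearMap.sub_apply]


theorem sum_rot {M : Type*} [AddCommMonoid M] (f : ι → ι → ι → M) :
    ∑ l, ∑ m, ∑ a, f l m a = ∑ a, ∑ m, ∑ l, f l m a :=
  calc ∑ l, ∑ m, ∑ a, f l m a = ∑ m, ∑ l, ∑ a, f l m a := Finset.sum_comm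
    _ = ∑ m, ∑ a, ∑ l, f l m a := Finset.sum_congr rfl (fun _ _ => Finset.sum_comm)
    _ = ∑ a, ∑ m, ∑ l, f l m a := Finset.sum_comm

noncomputable def qOp (w : ι → 𝓐) (X : Matrix ι ι ℂ) : 𝓐 :=
  ∑ j, ∑ k, X j k • (w j * w k)

noncomputable def sandOp (w : ι → 𝓐) (X : Matrix ι ι ℂ) : 𝓐 →L[ℂ] 𝓐 :=
  ∑ j, ∑ k, X j k • mulLeftRight ℂ 𝓐 (w j) (w k)

theorem mlr_comp (a b c d : 𝓐) : mulLeftRight ℂ 𝓐 a b * mulLeftRight ℂ 𝓐 c d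
    = mulLeftRight ℂ 𝓐 (a*c) (d*b) := by
  ext x; simp [mulLeftRight_apply, mul_assoc]

theorem qOp_smul (w : ι → 𝓐) (c : ℂ) (X : Matrix ι ι ℂ) :
    qOp w (c • X) = c • qOp w X := by
  simp [qOp, Finset.smul_sum, smul_smul]

theorem qOp_add (w : ι → 𝓐) (X Y : Matrix ι ι ℂ) :
    qOp w (X + Y) = qOp w X + qOp w Y := by
  simp [qOp, add_smul, Finset.sum_add_distrib]

theorem qOp_sub (w : ι → 𝓐) (X Y : Matrix ι ι ℂ) :
    qOp w (X - Y) = qOp w X - qOp w Y := by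
  simp [qOp, sub_smul, Finset.sum_sub_distrib]

theorem sandOp_smul (w : ι → 𝓐) (c : ℂ) (X : Matrix ι ι ℂ) :
    sandOp w (c • X) = c • sandOp w X := by
  simp [sandOp, Finset.smul_sum, smul_smul]

theorem sandOp_add (w : ι → 𝓐) (X Y : Matrix ι ι ℂ) :
    sandOp w (X + Y) = sandOp w X + sandOp w Y := by
  simp [sandOp, add_smul, Finset.sum_add_distrib]

theorem sandOp_sub (w : ι → 𝓐) (X Y : Matrix ι ι ℂ) :
    sandOp w (X - Y) = sandOp w X - sandOp w Y := by
  simp [sandOp, sub_smul, Finset.sum_sub_distrib]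


theorem sum_swap4 {M : Type*} [AddCommMonoid M] (f : ι → ι → ι → ι → M) :
    ∑ l, ∑ m, ∑ j, ∑ k, f l m j k = ∑ j, ∑ k, ∑ l, ∑ m, f l m j k :=
  calc ∑ l, ∑ m, ∑ j, ∑ k, f l m j k
      = ∑ l, ∑ j, ∑ m, ∑ k, f l m j k :=
        Finset.sum_congr rfl (fun _ _ => Finset.sum_comm)
    _ = ∑ j, ∑ l, ∑ m, ∑ k, f l m j k := Finset.sum_comm
    _ = ∑ j, ∑ k, ∑ m, ∑ l, f l m j k :=
        Finset.sum_congr rfl (fun _ _ => sum_rot _)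
    _ = ∑ j, ∑ k, ∑ l, ∑ m, f l m j k :=
        Finset.sum_congr rfl (fun _ _ => Finset.sum_congr rfl (fun _ _ => Finset.sum_comm))

theorem mlrq_left (w : ι → 𝓐) (X : Matrix ι ι ℂ) (y : 𝓐) :
    mulLeftRight ℂ 𝓐 (qOp w X) y = ∑ j, ∑ k, X j k • mulLeftRight ℂ 𝓐 (w j * w k) y := by
  simp [qOp, map_sum, map_smul, ContinuousLinearMap.sum_apply, ContinuousLinearMap.smul_apply]

theorem mlrq_right (w : ι → 𝓐) (X : Matrix ι ι ℂ) (x : 𝓐) :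
    mulLeftRight ℂ 𝓐 x (qOp w X) = ∑ j, ∑ k, X j k • mulLeftRight ℂ 𝓐 x (w j * w k) := by
  simp [qOp, map_sum, map_smul]

theorem Gsmul_mul (c : ℂ) (f g : 𝓐 →L[ℂ] 𝓐) : (c • f) * g = c • (f * g) := by
  ext x; simp [ContinuousLinearMap.mul_apply]

theorem Gmul_smul (c : ℂ) (f g : 𝓐 →L[ℂ] 𝓐) : f * (c • g) = c • (f * g) := by
  ext x; simp [ContinuousLinearMap.mul_apply, map_smul]

theorem lm_rm_comm (x y : 𝓐) : mulLeftRight ℂ 𝓐 x 1 * mulLeftRight ℂ 𝓐 1 y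
    = mulLeftRight ℂ 𝓐 1 y * mulLeftRight ℂ 𝓐 x 1 := by
  rw [mlr_comp, mlr_comp]; simp

theorem qOp_neg (w : ι → 𝓐) (X : Matrix ι ι ℂ) : qOp w (-X) = - qOp w X := by
  simp [qOp, neg_smul, Finset.sum_neg_distrib]

section CAR
variable (w : ι → 𝓐) (hww : ∀ j k, w j * w k + w k * w j = if j = k then 2 else 0)
include hww

theorem swapw (j k : ι) : w j * w k = (if j = k then (2:ℂ) else 0) • 1 - w k * w j := by
  have := hww j k
  have h2 : ((if j = k then (2:ℂ) else 0) • (1:𝓐)) = if j = k then (2:𝓐) else 0 := by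
    split_ifs <;> simp [two_smul, one_add_one_eq_two]
  rw [h2]
  linear_combination (norm := noncomm_ring) this

theorem www (l m j : ι) : w l * w m * w j
    = (if m = j then (2:ℂ) else 0) • w l - (if l = j then (2:ℂ) else 0) • w m
      + w j * (w l * w m) := by
  have h1 := swapw w hww m j
  have h2 := swapw w hww l j
  calc w l * w m * w j = w l * (w m * w j) := by rw [mul_assoc]
    _ = w l * ((if m = j then (2:ℂ) else 0) • 1 - w j * w m) := by rw [h1]
    _ = (if m = j then (2:ℂ) else 0) • w l - (w l * w j) * w m := by
        rw [mul_sub, mul_smul_comm, mul_one, mul_assoc]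
    _ = (if m = j then (2:ℂ) else 0) • w l
        - ((if l = j then (2:ℂ) else 0) • 1 - w j * w l) * w m := by rw [h2]
    _ = _ := by noncomm_ring

theorem qw (X : Matrix ι ι ℂ) (j : ι) :
    qOp w X * w j = w j * qOp w X + (2:ℂ) • ∑ l, (Xᵀ - X) j l • w l := by
  have expand : qOp w X * w j = ∑ l, ∑ m, X l m • (w l * w m * w j) := by
    simp [qOp, Finset.sum_mul, smul_mul_assoc]
  rw [expand]
  have key : ∀ l m, X l m • (w l * w m * w j)
      = (X l m * if m = j then (2:ℂ) else 0) • w l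
        - (X l m * if l = j then (2:ℂ) else 0) • w m
        + X l m • (w j * (w l * w m)) := by
    intro l m
    rw [www w hww l m j, smul_add, smul_sub, smul_smul, smul_smul]
  simp_rw [key, Finset.sum_add_distrib, Finset.sum_sub_distrib]
  have S1 : (∑ l, ∑ m, (X l m * if m = j then (2:ℂ) else 0) • w l)
      = ∑ l, (X l j * 2) • w l := by
    apply Finset.sum_congr rfl; intro l _
    simp [mul_ite, ite_smul, Finset.sum_ite_eq']
  have S2 : (∑ l, ∑ m, (X l m * if l = j then (2:ℂ) else 0) • w m)
      = ∑ m, (X j m * 2) • w m := by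
    rw [Finset.sum_comm]
    apply Finset.sum_congr rfl; intro m _
    simp [mul_ite, ite_smul, Finset.sum_ite_eq']
  have S3 : (∑ l, ∑ m, X l m • (w j * (w l * w m))) = w j * qOp w X := by
    simp [qOp, Finset.mul_sum, mul_smul_comm]
  rw [S1, S2, S3, Finset.smul_sum]
  rw [add_comm]
  congr 1
  rw [← Finset.sum_sub_distrib]
  apply Finset.sum_congr rfl; intro l _
  simp only [Matrix.sub_apply, Matrix.transpose_apply]
  module

/-- variant with the scalar 2 absorbed into the matrix -/
theorem qw' (X : Matrix ι ι ℂ) (j : ι) :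
    qOp w X * w j = w j * qOp w X + ∑ l, ((2:ℂ) • (Xᵀ - X)) j l • w l := by
  rw [qw w hww X j, Finset.smul_sum]
  congr 1
  apply Finset.sum_congr rfl; intro l _
  simp [smul_smul]

theorem qq_gen (X Y : Matrix ι ι ℂ) :
    qOp w X * qOp w Y = qOp w Y * qOp w X
      + qOp w (Y * ((2:ℂ) • (Xᵀ - X))) + qOp w (((2:ℂ) • (Xᵀ - X))ᵀ * Y) := by
  set Z := (2:ℂ) • (Xᵀ - X) with hZ
  have e1 : ∀ l m, qOp w X * (w l * w m)
      = (w l * w m) * qOp w X + w l * (∑ a, Z m a • w a) + (∑ a, Z l a • w a) * w m := by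
    intro l m
    calc qOp w X * (w l * w m) = (qOp w X * w l) * w m := by rw [mul_assoc]
      _ = (w l * qOp w X + ∑ a, Z l a • w a) * w m := by rw [qw' w hww]
      _ = w l * (qOp w X * w m) + (∑ a, Z l a • w a) * w m := by
          rw [add_mul, mul_assoc]
      _ = w l * (w m * qOp w X + ∑ a, Z m a • w a) + (∑ a, Z l a • w a) * w m := by
          rw [qw' w hww]
      _ = _ := by noncomm_ring
  have expand : qOp w X * qOp w Y = ∑ l, ∑ m, Y l m • (qOp w X * (w l * w m)) := by
    simp [qOp, Finset.mul_sum, mul_smul_comm]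
  rw [expand]
  simp_rw [e1, smul_add, Finset.sum_add_distrib]
  congr 1
  · congr 1
    · simp [qOp, Finset.sum_mul, smul_mul_assoc]
    · -- ∑ l, ∑ m, Y l m • (w l * ∑ a, Z m a • w a) = qOp w (Y * Z)
      have : ∀ l m, Y l m • (w l * ∑ a, Z m a • w a)
          = ∑ a, (Y l m * Z m a) • (w l * w a) := by
        intro l m
        rw [Finset.mul_sum, Finset.smul_sum]
        apply Finset.sum_congr rfl; intro a _
        rw [mul_smul_comm, smul_smul]
      simp_rw [this]
      rw [qOp]
      apply Finset.sum_congr rfl; intro l _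
      rw [Finset.sum_comm]
      apply Finset.sum_congr rfl; intro a _
      rw [Matrix.mul_apply, Finset.sum_smul]
  · -- ∑ l, ∑ m, Y l m • ((∑ a, Z l a • w a) * w m) = qOp w (Zᵀ * Y)
    have : ∀ l m, Y l m • ((∑ a, Z l a • w a) * w m)
        = ∑ a, (Z l a * Y l m) • (w a * w m) := by
      intro l m
      rw [Finset.sum_mul, Finset.smul_sum]
      apply Finset.sum_congr rfl; intro a _
      rw [smul_mul_assoc, smul_smul, mul_comm]
    simp_rw [this]
    rw [sum_rot (f := fun l m a => (Z l a * Y l m) • (w a * w m))]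
    rw [qOp]
    apply Finset.sum_congr rfl; intro a _
    apply Finset.sum_congr rfl; intro m _
    rw [Matrix.mul_apply, Finset.sum_smul]
    apply Finset.sum_congr rfl; intro l _
    rw [Matrix.transpose_apply]

theorem qq_comm (X Y : Matrix ι ι ℂ) (hX : Xᵀ = -X) :
    qOp w X * qOp w Y - qOp w Y * qOp w X = (4:ℂ) • qOp w (X * Y - Y * X) := by
  rw [qq_gen w hww X Y, hX]
  have h1 : Y * ((2:ℂ) • (-X - X)) = (4:ℂ) • -(Y * X) := by
    rw [Matrix.mul_smul, Matrix.mul_sub, Matrix.mul_neg]; module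
  have h2 : ((2:ℂ) • (-X - X))ᵀ * Y = (4:ℂ) • (X * Y) := by
    rw [Matrix.transpose_smul, Matrix.transpose_sub, Matrix.transpose_neg, hX,
      Matrix.smul_mul, Matrix.sub_mul]
    simp only [Matrix.neg_mul, neg_neg]
    module
  rw [h1, h2, qOp_smul, qOp_smul, qOp_sub]
  have h3 : qOp w (-(Y*X)) = - qOp w (Y*X) := qOp_neg w _
  rw [h3]
  module

theorem qsym (Z : Matrix ι ι ℂ) : qOp w (Z + Zᵀ) = ((2:ℂ) * Z.trace) • (1:𝓐) := by
  have : qOp w (Z + Zᵀ) = ∑ j, ∑ k, Z j k • (w j * w k + w k * w j) := by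
    rw [qOp]
    have e : ∀ j k, ((Z + Zᵀ) j k) • (w j * w k)
        = Z j k • (w j * w k) + Z k j • (w j * w k) := by
      intro j k; simp [Matrix.add_apply, add_smul]
    simp_rw [e, Finset.sum_add_distrib, smul_add, Finset.sum_add_distrib]
    congr 1
    rw [Finset.sum_comm]
  rw [this]
  have e2 : ∀ j k, Z j k • (w j * w k + w k * w j)
      = (if j = k then Z j k * 2 else 0) • (1:𝓐) := by
    intro j k
    rw [hww j k]
    split_ifs with h
    · rw [← smul_smul]
      congr 1
      simp [two_smul, one_add_one_eq_two]
    · simp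
  simp_rw [e2]
  have e3 : ∀ j, (∑ k, (if j = k then Z j k * 2 else 0) • (1:𝓐)) = (Z j j * 2) • 1 := by
    intro j; simp [ite_smul, Finset.sum_ite_eq]
  simp_rw [e3]
  rw [← Finset.sum_smul, ← Finset.sum_mul, mul_comm, Matrix.trace]
  rfl

theorem q_decomp (Z : Matrix ι ι ℂ) :
    qOp w Z = (2:ℂ)⁻¹ • qOp w (Z - Zᵀ) + Z.trace • (1:𝓐) := by
  have h2 : (2:ℂ) • qOp w Z = qOp w (Z - Zᵀ) + ((2:ℂ) * Z.trace) • 1 := by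
    rw [← qsym w hww Z, ← qOp_add, ← qOp_smul]
    congr 1
    module
  have h3 := congrArg (fun x => (2:ℂ)⁻¹ • x) h2
  simp only [smul_add, smul_smul] at h3
  have h4 : (2:ℂ)⁻¹ * 2 = 1 := by norm_num
  rw [h4, one_smul] at h3
  rw [h3]
  congr 2
  rw [← mul_assoc, h4, one_mul]

theorem lmSand (X Y : Matrix ι ι ℂ) :
    mulLeftRight ℂ 𝓐 (qOp w X) 1 * sandOp w Y - sandOp w Y * mulLeftRight ℂ 𝓐 (qOp w X) 1
      = sandOp w ((((2:ℂ) • (Xᵀ - X))ᵀ) * Y) := by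
  set Z := (2:ℂ) • (Xᵀ - X) with hZ
  have hL : mulLeftRight ℂ 𝓐 (qOp w X) 1 * sandOp w Y
      = ∑ j, ∑ k, Y j k • mulLeftRight ℂ 𝓐 (qOp w X * w j) (w k) := by
    rw [sandOp, Finset.mul_sum]
    refine Finset.sum_congr rfl fun j _ => ?_
    rw [Finset.mul_sum]
    refine Finset.sum_congr rfl fun k _ => ?_
    rw [Gmul_smul, mlr_comp, mul_one]
  have hR : sandOp w Y * mulLeftRight ℂ 𝓐 (qOp w X) 1
      = ∑ j, ∑ k, Y j k • mulLeftRight ℂ 𝓐 (w j * qOp w X) (w k) := by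
    rw [sandOp, Finset.sum_mul]
    refine Finset.sum_congr rfl fun j _ => ?_
    rw [Finset.sum_mul]
    refine Finset.sum_congr rfl fun k _ => ?_
    rw [Gsmul_mul, mlr_comp, one_mul]
  rw [hL, hR]
  have step : ∀ j k : ι, (Y j k • mulLeftRight ℂ 𝓐 (qOp w X * w j) (w k)
      - Y j k • mulLeftRight ℂ 𝓐 (w j * qOp w X) (w k))
      = ∑ l, (Y j k * Z j l) • mulLeftRight ℂ 𝓐 (w l) (w k) := by
    intro j k
    rw [← smul_sub]
    have hdiff : mulLeftRight ℂ 𝓐 (qOp w X * w j) (w k)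
        - mulLeftRight ℂ 𝓐 (w j * qOp w X) (w k)
        = ∑ l, Z j l • mulLeftRight ℂ 𝓐 (w l) (w k) := by
      rw [qw' w hww X j, map_add, map_sum]
      simp only [map_smul, ContinuousLinearMap.add_apply, ContinuousLinearMap.sum_apply,
        ContinuousLinearMap.smul_apply]
      abel
    rw [hdiff, Finset.smul_sum]
    refine Finset.sum_congr rfl fun l _ => ?_
    rw [smul_smul]
  have split : (∑ j, ∑ k, Y j k • mulLeftRight ℂ 𝓐 (qOp w X * w j) (w k))
      - (∑ j, ∑ k, Y j k • mulLeftRight ℂ 𝓐 (w j * qOp w X) (w k))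
      = ∑ j, ∑ k, ∑ l, (Y j k * Z j l) • mulLeftRight ℂ 𝓐 (w l) (w k) := by
    rw [← Finset.sum_sub_distrib]
    refine Finset.sum_congr rfl fun j _ => ?_
    rw [← Finset.sum_sub_distrib]
    exact Finset.sum_congr rfl fun k _ => step j k
  rw [split, sum_rot (f := fun j k l => (Y j k * Z j l) • mulLeftRight ℂ 𝓐 (w l) (w k)),
    sandOp]
  refine Finset.sum_congr rfl fun l _ => ?_
  refine Finset.sum_congr rfl fun k _ => ?_
  rw [Matrix.mul_apply, Finset.sum_smul]
  refine Finset.sum_congr rfl fun j _ => ?_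
  rw [Matrix.transpose_apply, mul_comm]

theorem rmSand (D Y : Matrix ι ι ℂ) :
    mulLeftRight ℂ 𝓐 1 (qOp w D) * sandOp w Y - sandOp w Y * mulLeftRight ℂ 𝓐 1 (qOp w D)
      = sandOp w (Y * ((2:ℂ) • (D - Dᵀ))) := by
  set Z := (2:ℂ) • (Dᵀ - D) with hZdef
  have hZ : Y * ((2:ℂ) • (D - Dᵀ)) = Y * (-Z) := by rw [hZdef]; congr 1; module
  have hL : mulLeftRight ℂ 𝓐 1 (qOp w D) * sandOp w Y
      = ∑ j, ∑ k, Y j k • mulLeftRight ℂ 𝓐 (w j) (w k * qOp w D) := by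
    rw [sandOp, Finset.mul_sum]
    refine Finset.sum_congr rfl fun j _ => ?_
    rw [Finset.mul_sum]
    refine Finset.sum_congr rfl fun k _ => ?_
    rw [Gmul_smul, mlr_comp, one_mul]
  have hR : sandOp w Y * mulLeftRight ℂ 𝓐 1 (qOp w D)
      = ∑ j, ∑ k, Y j k • mulLeftRight ℂ 𝓐 (w j) (qOp w D * w k) := by
    rw [sandOp, Finset.sum_mul]
    refine Finset.sum_congr rfl fun j _ => ?_
    rw [Finset.sum_mul]
    refine Finset.sum_congr rfl fun k _ => ?_
    rw [Gsmul_mul, mlr_comp, mul_one]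
  rw [hL, hR, hZ]
  have step : ∀ j k : ι, (Y j k • mulLeftRight ℂ 𝓐 (w j) (w k * qOp w D)
      - Y j k • mulLeftRight ℂ 𝓐 (w j) (qOp w D * w k))
      = ∑ l, (Y j k * (-Z) k l) • mulLeftRight ℂ 𝓐 (w j) (w l) := by
    intro j k
    rw [← smul_sub]
    have hdiff : mulLeftRight ℂ 𝓐 (w j) (w k * qOp w D)
        - mulLeftRight ℂ 𝓐 (w j) (qOp w D * w k)
        = ∑ l, (-Z) k l • mulLeftRight ℂ 𝓐 (w j) (w l) := by
      rw [qw' w hww D k, map_add, map_sum]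
      simp only [map_smul, Matrix.neg_apply, neg_smul, Finset.sum_neg_distrib]
      abel
    rw [hdiff, Finset.smul_sum]
    refine Finset.sum_congr rfl fun l _ => ?_
    rw [smul_smul]
  have split : (∑ j, ∑ k, Y j k • mulLeftRight ℂ 𝓐 (w j) (w k * qOp w D))
      - (∑ j, ∑ k, Y j k • mulLeftRight ℂ 𝓐 (w j) (qOp w D * w k))
      = ∑ j, ∑ k, ∑ l, (Y j k * (-Z) k l) • mulLeftRight ℂ 𝓐 (w j) (w l) := by
    rw [← Finset.sum_sub_distrib]
    refine Finset.sum_congr rfl fun j _ => ?_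
    rw [← Finset.sum_sub_distrib]
    exact Finset.sum_congr rfl fun k _ => step j k
  rw [split, sandOp]
  refine Finset.sum_congr rfl fun j _ => ?_
  rw [Finset.sum_comm]
  refine Finset.sum_congr rfl fun l _ => ?_
  rw [Matrix.mul_apply, Finset.sum_smul]

theorem sandsand (X Y : Matrix ι ι ℂ) :
    sandOp w X * sandOp w Y - sandOp w Y * sandOp w X
      = (2:ℂ) • mulLeftRight ℂ 𝓐 1 (qOp w (Yᵀ * X))
        - (2:ℂ) • mulLeftRight ℂ 𝓐 (qOp w (Y * Xᵀ)) 1 := by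
  have key : ∀ j k l m : ι,
      mulLeftRight ℂ 𝓐 (w j * w l) (w m * w k)
        - mulLeftRight ℂ 𝓐 (w l * w j) (w k * w m)
      = (if j = l then (2:ℂ) else 0) • mulLeftRight ℂ 𝓐 1 (w m * w k)
        - (if m = k then (2:ℂ) else 0) • mulLeftRight ℂ 𝓐 (w l * w j) 1 := by
    intro j k l m
    have e1 : mulLeftRight ℂ 𝓐 (w j * w l) (w m * w k)
        = (if j = l then (2:ℂ) else 0) • mulLeftRight ℂ 𝓐 1 (w m * w k)
          - mulLeftRight ℂ 𝓐 (w l * w j) (w m * w k) := by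
      rw [swapw w hww j l]
      split_ifs with h <;> simp [map_sub, map_smul]
    have e2 : mulLeftRight ℂ 𝓐 (w l * w j) (w m * w k)
        = (if m = k then (2:ℂ) else 0) • mulLeftRight ℂ 𝓐 (w l * w j) 1
          - mulLeftRight ℂ 𝓐 (w l * w j) (w k * w m) := by
      rw [swapw w hww m k]
      split_ifs with h <;> simp [map_sub, map_smul]
    rw [e1, e2]
    abel
  have hL : sandOp w X * sandOp w Y
      = ∑ j, ∑ k, ∑ l, ∑ m, (X j k * Y l m) •
          mulLeftRight ℂ 𝓐 (w j * w l) (w m * w k) := by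
    rw [sandOp, sandOp, Finset.sum_mul]
    refine Finset.sum_congr rfl fun j _ => ?_
    rw [Finset.sum_mul]
    refine Finset.sum_congr rfl fun k _ => ?_
    rw [Finset.mul_sum]
    refine Finset.sum_congr rfl fun l _ => ?_
    rw [Finset.mul_sum]
    refine Finset.sum_congr rfl fun m _ => ?_
    rw [Gsmul_mul, Gmul_smul, smul_smul, mlr_comp]
  have hR : sandOp w Y * sandOp w X
      = ∑ j, ∑ k, ∑ l, ∑ m, (X j k * Y l m) •
          mulLeftRight ℂ 𝓐 (w l * w j) (w k * w m) := by
    have hR0 : sandOp w Y * sandOp w X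
        = ∑ l, ∑ m, ∑ j, ∑ k, (X j k * Y l m) •
            mulLeftRight ℂ 𝓐 (w l * w j) (w k * w m) := by
      rw [sandOp, sandOp, Finset.sum_mul]
      refine Finset.sum_congr rfl fun l _ => ?_
      rw [Finset.sum_mul]
      refine Finset.sum_congr rfl fun m _ => ?_
      rw [Finset.mul_sum]
      refine Finset.sum_congr rfl fun j _ => ?_
      rw [Finset.mul_sum]
      refine Finset.sum_congr rfl fun k _ => ?_
      rw [Gsmul_mul, Gmul_smul, smul_smul, mlr_comp, mul_comm (Y l m) (X j k)]
    rw [hR0]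
    exact sum_swap4 _
  rw [hL, hR]
  have comb : (∑ j, ∑ k, ∑ l, ∑ m, (X j k * Y l m) •
          mulLeftRight ℂ 𝓐 (w j * w l) (w m * w k))
      - (∑ j, ∑ k, ∑ l, ∑ m, (X j k * Y l m) •
          mulLeftRight ℂ 𝓐 (w l * w j) (w k * w m))
      = ∑ j, ∑ k, ∑ l, ∑ m, ((X j k * Y l m * if j = l then (2:ℂ) else 0) •
            mulLeftRight ℂ 𝓐 1 (w m * w k)
          - (X j k * Y l m * if m = k then (2:ℂ) else 0) •
            mulLeftRight ℂ 𝓐 (w l * w j) 1) := by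
    rw [← Finset.sum_sub_distrib]
    refine Finset.sum_congr rfl fun j _ => ?_
    rw [← Finset.sum_sub_distrib]
    refine Finset.sum_congr rfl fun k _ => ?_
    rw [← Finset.sum_sub_distrib]
    refine Finset.sum_congr rfl fun l _ => ?_
    rw [← Finset.sum_sub_distrib]
    refine Finset.sum_congr rfl fun m _ => ?_
    rw [← smul_sub, key j k l m, smul_sub, smul_smul, smul_smul]
  rw [comb]
  have sumsplit : (∑ j, ∑ k, ∑ l, ∑ m, ((X j k * Y l m * if j = l then (2:ℂ) else 0) •
            mulLeftRight ℂ 𝓐 1 (w m * w k)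
          - (X j k * Y l m * if m = k then (2:ℂ) else 0) •
            mulLeftRight ℂ 𝓐 (w l * w j) 1))
      = (∑ j, ∑ k, ∑ l, ∑ m, (X j k * Y l m * if j = l then (2:ℂ) else 0) •
            mulLeftRight ℂ 𝓐 1 (w m * w k))
        - (∑ j, ∑ k, ∑ l, ∑ m, (X j k * Y l m * if m = k then (2:ℂ) else 0) •
            mulLeftRight ℂ 𝓐 (w l * w j) 1) := by
    simp [Finset.sum_sub_distrib]
  rw [sumsplit]
  have termA : (∑ j, ∑ k, ∑ l, ∑ m, (X j k * Y l m * if j = l then (2:ℂ) else 0) •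
        mulLeftRight ℂ 𝓐 1 (w m * w k))
      = (2:ℂ) • mulLeftRight ℂ 𝓐 1 (qOp w (Yᵀ * X)) := by
    have c1 : ∀ j k : ι, (∑ l, ∑ m, (X j k * Y l m * if j = l then (2:ℂ) else 0) •
          mulLeftRight ℂ 𝓐 1 (w m * w k))
        = ∑ m, (X j k * Y j m * 2) • mulLeftRight ℂ 𝓐 1 (w m * w k) := by
      intro j k
      rw [Finset.sum_comm]
      refine Finset.sum_congr rfl fun m _ => ?_
      simp [mul_ite, ite_smul, Finset.sum_ite_eq]
    simp_rw [c1]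
    rw [sum_rot (f := fun j k m => (X j k * Y j m * 2) • mulLeftRight ℂ 𝓐 1 (w m * w k))]
    rw [mlrq_right, Finset.smul_sum]
    refine Finset.sum_congr rfl fun m _ => ?_
    rw [Finset.smul_sum]
    refine Finset.sum_congr rfl fun k _ => ?_
    rw [smul_smul, Matrix.mul_apply, Finset.mul_sum, Finset.sum_smul]
    refine Finset.sum_congr rfl fun j _ => ?_
    rw [Matrix.transpose_apply]
    ring_nf
  have termB : (∑ j, ∑ k, ∑ l, ∑ m, (X j k * Y l m * if m = k then (2:ℂ) else 0) •
        mulLeftRight ℂ 𝓐 (w l * w j) 1)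
      = (2:ℂ) • mulLeftRight ℂ 𝓐 (qOp w (Y * Xᵀ)) 1 := by
    have c1 : ∀ j k : ι, (∑ l, ∑ m, (X j k * Y l m * if m = k then (2:ℂ) else 0) •
          mulLeftRight ℂ 𝓐 (w l * w j) 1)
        = ∑ l, (X j k * Y l k * 2) • mulLeftRight ℂ 𝓐 (w l * w j) 1 := by
      intro j k
      refine Finset.sum_congr rfl fun l _ => ?_
      simp [mul_ite, ite_smul, Finset.sum_ite_eq']
    simp_rw [c1]
    rw [sum_rot (f := fun j k l => (X j k * Y l k * 2) • mulLeftRight ℂ 𝓐 (w l * w j) 1)]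
    -- now: ∑ l, ∑ k, ∑ j — want ∑ l, ∑ j, ∑ k
    rw [mlrq_left, Finset.smul_sum]
    refine Finset.sum_congr rfl fun l _ => ?_
    rw [Finset.sum_comm, Finset.smul_sum]
    refine Finset.sum_congr rfl fun j _ => ?_
    rw [smul_smul, Matrix.mul_apply, Finset.mul_sum, Finset.sum_smul]
    refine Finset.sum_congr rfl fun k _ => ?_
    rw [Matrix.transpose_apply]
    ring_nf
  rw [termA, termB]

theorem lm_comm (X Y : Matrix ι ι ℂ) (hX : Xᵀ = -X) :
    mulLeftRight ℂ 𝓐 (qOp w X) 1 * mulLeftRight ℂ 𝓐 (qOp w Y) 1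
      - mulLeftRight ℂ 𝓐 (qOp w Y) 1 * mulLeftRight ℂ 𝓐 (qOp w X) 1
    = (4:ℂ) • mulLeftRight ℂ 𝓐 (qOp w (X*Y - Y*X)) 1 := by
  rw [mlr_comp, mlr_comp, one_mul, mlr_sub_one, qq_comm w hww X Y hX, map_smul,
    ContinuousLinearMap.smul_apply]

theorem rm_comm (X Y : Matrix ι ι ℂ) (hY : Yᵀ = -Y) :
    mulLeftRight ℂ 𝓐 1 (qOp w X) * mulLeftRight ℂ 𝓐 1 (qOp w Y)
      - mulLeftRight ℂ 𝓐 1 (qOp w Y) * mulLeftRight ℂ 𝓐 1 (qOp w X)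
    = (4:ℂ) • mulLeftRight ℂ 𝓐 1 (qOp w (Y*X - X*Y)) := by
  rw [mlr_comp, mlr_comp, one_mul, ← map_sub, qq_comm w hww Y X hY, map_smul]

theorem lmSand_comm (X Y : Matrix ι ι ℂ) (hX : Xᵀ = -X) :
    mulLeftRight ℂ 𝓐 (qOp w X) 1 * sandOp w Y - sandOp w Y * mulLeftRight ℂ 𝓐 (qOp w X) 1
      = (4:ℂ) • sandOp w (X * Y) := by
  rw [lmSand w hww X Y]
  have hmx : (((2:ℂ) • (Xᵀ - X))ᵀ) * Y = (4:ℂ) • (X * Y) := by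
    rw [Matrix.transpose_smul, Matrix.transpose_sub, Matrix.transpose_transpose, hX,
      Matrix.smul_mul, Matrix.sub_mul]
    simp only [Matrix.neg_mul, sub_neg_eq_add]
    module
  rw [hmx, sandOp_smul]

theorem rmSand_comm (D Y : Matrix ι ι ℂ) (hD : Dᵀ = -D) :
    mulLeftRight ℂ 𝓐 1 (qOp w D) * sandOp w Y - sandOp w Y * mulLeftRight ℂ 𝓐 1 (qOp w D)
      = (4:ℂ) • sandOp w (Y * D) := by
  rw [rmSand w hww D Y]
  have hmx : Y * ((2:ℂ) • (D - Dᵀ)) = (4:ℂ) • (Y * D) := by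
    rw [hD, Matrix.mul_smul, Matrix.mul_sub]
    simp only [Matrix.mul_neg, sub_neg_eq_add]
    module
  rw [hmx, sandOp_smul]

include hww in
theorem grand (C D Em C' D' Em' : Matrix ι ι ℂ)
    (hC : Cᵀ = -C) (hC' : C'ᵀ = -C') (hD : Dᵀ = -D) (hD' : D'ᵀ = -D') :
    ((4:ℂ)⁻¹ • (mulLeftRight ℂ 𝓐 (qOp w C) 1 + mulLeftRight ℂ 𝓐 1 (qOp w D) + sandOp w Em)) *
      ((4:ℂ)⁻¹ • (mulLeftRight ℂ 𝓐 (qOp w C') 1 + mulLeftRight ℂ 𝓐 1 (qOp w D') + sandOp w Em'))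
    - ((4:ℂ)⁻¹ • (mulLeftRight ℂ 𝓐 (qOp w C') 1 + mulLeftRight ℂ 𝓐 1 (qOp w D') + sandOp w Em')) *
      ((4:ℂ)⁻¹ • (mulLeftRight ℂ 𝓐 (qOp w C) 1 + mulLeftRight ℂ 𝓐 1 (qOp w D) + sandOp w Em))
    = (4:ℂ)⁻¹ • (mulLeftRight ℂ 𝓐 (qOp w (C*C' - C'*C - (4:ℂ)⁻¹ • (Em' * Emᵀ - Em * Em'ᵀ))) 1
        + mulLeftRight ℂ 𝓐 1 (qOp w (D'*D - D*D' + (4:ℂ)⁻¹ • (Em'ᵀ * Em - Emᵀ * Em')))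
        + sandOp w (C * Em' - C' * Em + Em' * D - Em * D')) := by
  set P : 𝓐 →L[ℂ] 𝓐 := mulLeftRight ℂ 𝓐 (qOp w C) 1 with hPdef
  set Q : 𝓐 →L[ℂ] 𝓐 := mulLeftRight ℂ 𝓐 1 (qOp w D) with hQdef
  set S : 𝓐 →L[ℂ] 𝓐 := sandOp w Em with hSdef
  set P' : 𝓐 →L[ℂ] 𝓐 := mulLeftRight ℂ 𝓐 (qOp w C') 1 with hP'def
  set Q' : 𝓐 →L[ℂ] 𝓐 := mulLeftRight ℂ 𝓐 1 (qOp w D') with hQ'def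
  set S' : 𝓐 →L[ℂ] 𝓐 := sandOp w Em' with hS'def
  -- scalar pull-out
  have hscal : ∀ L1 L2 : 𝓐 →L[ℂ] 𝓐,
      ((4:ℂ)⁻¹ • L1) * ((4:ℂ)⁻¹ • L2) - ((4:ℂ)⁻¹ • L2) * ((4:ℂ)⁻¹ • L1)
        = (16:ℂ)⁻¹ • (L1*L2 - L2*L1) := by
    intro L1 L2
    rw [Gsmul_mul, Gmul_smul, Gsmul_mul, Gmul_smul, smul_smul, smul_smul]
    module
  rw [hscal]
  have hexp : (P+Q+S) * (P'+Q'+S') - (P'+Q'+S') * (P+Q+S)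
      = (P*P' - P'*P) + (Q*Q' - Q'*Q)
        + ((P*Q' - Q'*P) + (Q*P' - P'*Q))
        + ((P*S' - S'*P) + (Q*S' - S'*Q) + (S*P' - P'*S) + (S*Q' - Q'*S))
        + (S*S' - S'*S) := by noncomm_ring
  rw [hexp]
  have h1 : P*P' - P'*P = (4:ℂ) • mulLeftRight ℂ 𝓐 (qOp w (C*C' - C'*C)) 1 :=
    lm_comm w hww C C' hC
  have h2 : Q*Q' - Q'*Q = (4:ℂ) • mulLeftRight ℂ 𝓐 1 (qOp w (D'*D - D*D')) :=
    rm_comm w hww D D' hD'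
  have hz : (P*Q' - Q'*P) + (Q*P' - P'*Q) = 0 := by
    rw [hPdef, hQdef, hP'def, hQ'def]
    simp [mlr_comp]
  have h5 : P*S' - S'*P = (4:ℂ) • sandOp w (C * Em') := lmSand_comm w hww C Em' hC
  have h6 : S*P' - P'*S = -((4:ℂ) • sandOp w (C' * Em)) := by
    rw [← neg_sub, lmSand_comm w hww C' Em hC']
  have h7 : Q*S' - S'*Q = (4:ℂ) • sandOp w (Em' * D) := rmSand_comm w hww D Em' hD
  have h8 : S*Q' - Q'*S = -((4:ℂ) • sandOp w (Em * D')) := by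
    rw [← neg_sub, rmSand_comm w hww D' Em hD']
  have h9 : S*S' - S'*S
      = (2:ℂ) • mulLeftRight ℂ 𝓐 1 (qOp w (Em'ᵀ * Em))
        - (2:ℂ) • mulLeftRight ℂ 𝓐 (qOp w (Em' * Emᵀ)) 1 := sandsand w hww Em Em'
  -- decompose the q's in h9
  have d1 : qOp w (Em'ᵀ * Em)
      = (2:ℂ)⁻¹ • qOp w (Em'ᵀ*Em - Emᵀ*Em') + ((Em'ᵀ*Em).trace) • (1:𝓐) := by
    have h := q_decomp w hww (Em'ᵀ*Em)
    rwa [Matrix.transpose_mul, Matrix.transpose_transpose] at h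
  have d2 : qOp w (Em' * Emᵀ)
      = (2:ℂ)⁻¹ • qOp w (Em'*Emᵀ - Em*Em'ᵀ) + ((Em'*Emᵀ).trace) • (1:𝓐) := by
    have h := q_decomp w hww (Em'*Emᵀ)
    rwa [Matrix.transpose_mul, Matrix.transpose_transpose] at h
  have htr : (Em'ᵀ*Em).trace = (Em'*Emᵀ).trace := by
    rw [Matrix.trace_mul_comm, ← Matrix.trace_transpose, Matrix.transpose_mul,
      Matrix.transpose_transpose]
  rw [d1, d2, htr] at h9
  have e1 : ∀ (u : 𝓐) (c t : ℂ), mulLeftRight ℂ 𝓐 1 (c • u + t • (1:𝓐))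
      = c • mulLeftRight ℂ 𝓐 1 u + t • mulLeftRight ℂ 𝓐 1 1 := by
    intro u c t; simp
  have e2 : ∀ (u : 𝓐) (c t : ℂ), mulLeftRight ℂ 𝓐 (c • u + t • (1:𝓐)) 1
      = c • mulLeftRight ℂ 𝓐 u 1 + t • mulLeftRight ℂ 𝓐 1 1 := by
    intro u c t
    simp [map_add, map_smul, ContinuousLinearMap.add_apply, ContinuousLinearMap.smul_apply]
  rw [e1, e2] at h9
  rw [h1, h2, hz, h5, h6, h7, h8, h9]
  -- RHS expansion
  have R1 : mulLeftRight ℂ 𝓐 (qOp w (C*C' - C'*C - (4:ℂ)⁻¹ • (Em' * Emᵀ - Em * Em'ᵀ))) 1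
      = mulLeftRight ℂ 𝓐 (qOp w (C*C' - C'*C)) 1
        - (4:ℂ)⁻¹ • mulLeftRight ℂ 𝓐 (qOp w (Em'*Emᵀ - Em*Em'ᵀ)) 1 := by
    rw [qOp_sub, qOp_smul]
    simp [map_sub, map_smul, ContinuousLinearMap.sub_apply, ContinuousLinearMap.smul_apply]
  have R2 : mulLeftRight ℂ 𝓐 1 (qOp w (D'*D - D*D' + (4:ℂ)⁻¹ • (Em'ᵀ * Em - Emᵀ * Em')))
      = mulLeftRight ℂ 𝓐 1 (qOp w (D'*D - D*D'))
        + (4:ℂ)⁻¹ • mulLeftRight ℂ 𝓐 1 (qOp w (Em'ᵀ*Em - Emᵀ*Em')) := by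
    rw [qOp_add, qOp_smul]
    simp [map_add, map_smul]
  have R3 : sandOp w (C * Em' - C' * Em + Em' * D - Em * D')
      = sandOp w (C*Em') - sandOp w (C'*Em) + sandOp w (Em'*D) - sandOp w (Em*D') := by
    rw [sandOp_sub, sandOp_add, sandOp_sub]
  rw [R1, R2, R3]
  module

end CAR


noncomputable def φ : Matrix ι ι ℝ →+* Matrix ι ι ℂ := (Complex.ofRealHom).mapMatrix

theorem φT (M : Matrix ι ι ℝ) : φ (Mᵀ) = (φ M)ᵀ := by
  ext i j; simp [φ, Matrix.transpose_apply, RingHom.mapMatrix_apply, Matrix.map_apply]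

noncomputable def CMat (A N : Matrix ι ι ℝ) : Matrix ι ι ℂ :=
  (2:ℂ)⁻¹ • (φ A - (φ A)ᵀ) + Complex.I • φ N

noncomputable def DMat (A N : Matrix ι ι ℝ) : Matrix ι ι ℂ :=
  Complex.I • φ N - (2:ℂ)⁻¹ • (φ A - (φ A)ᵀ)

noncomputable def EMat (A N : Matrix ι ι ℝ) : Matrix ι ι ℂ :=
  -(φ A) - (φ A)ᵀ + ((2:ℂ) * Complex.I) • φ N

section anti
variable {A B N R : Matrix ι ι ℝ}

theorem hNφ (hN : Nᵀ = -N) : (φ N)ᵀ = -(φ N) := by rw [← φT, hN, map_neg]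

theorem CMat_T (hN : Nᵀ = -N) : (CMat A N)ᵀ = -(CMat A N) := by
  rw [CMat]
  simp only [Matrix.transpose_add, Matrix.transpose_smul, Matrix.transpose_sub,
    Matrix.transpose_transpose, hNφ hN]
  module

theorem DMat_T (hN : Nᵀ = -N) : (DMat A N)ᵀ = -(DMat A N) := by
  rw [DMat]
  simp only [Matrix.transpose_sub, Matrix.transpose_smul,
    Matrix.transpose_transpose, hNφ hN]
  module

theorem EMat_T (hN : Nᵀ = -N) : (EMat A N)ᵀ = -(φ A) - (φ A)ᵀ - ((2:ℂ) * Complex.I) • φ N := by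
  rw [EMat]
  simp only [Matrix.transpose_add, Matrix.transpose_sub, Matrix.transpose_smul,
    Matrix.transpose_neg, Matrix.transpose_transpose, hNφ hN]
  module

theorem MatId1 (hN : Nᵀ = -N) (hR : Rᵀ = -R) :
    CMat (A * B - B * A) (A * R + R * Aᵀ - B * N - N * Bᵀ)
      = CMat A N * CMat B R - CMat B R * CMat A N
        - (4:ℂ)⁻¹ • (EMat B R * (EMat A N)ᵀ - EMat A N * (EMat B R)ᵀ) := by
  rw [EMat_T hN, EMat_T hR]
  simp only [CMat, EMat]
  simp only [map_sub, map_add, map_mul, φT, Matrix.transpose_sub, Matrix.transpose_add,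
    Matrix.transpose_mul, Matrix.transpose_smul, Matrix.transpose_neg,
    Matrix.transpose_transpose, hNφ hN, hNφ hR]
  simp only [mul_add, add_mul, mul_sub, sub_mul, smul_mul_assoc, mul_smul_comm,
    smul_smul, smul_add, smul_sub, smul_neg, neg_mul, mul_neg, neg_neg, neg_add, neg_sub]
  module

theorem MatId2 (hN : Nᵀ = -N) (hR : Rᵀ = -R) :
    DMat (A * B - B * A) (A * R + R * Aᵀ - B * N - N * Bᵀ)
      = DMat B R * DMat A N - DMat A N * DMat B R
        + (4:ℂ)⁻¹ • ((EMat B R)ᵀ * EMat A N - (EMat A N)ᵀ * EMat B R) := by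
  rw [EMat_T hN, EMat_T hR]
  simp only [DMat, EMat]
  simp only [map_sub, map_add, map_mul, φT, Matrix.transpose_sub, Matrix.transpose_add,
    Matrix.transpose_mul, Matrix.transpose_smul, Matrix.transpose_neg,
    Matrix.transpose_transpose, hNφ hN, hNφ hR]
  simp only [mul_add, add_mul, mul_sub, sub_mul, smul_mul_assoc, mul_smul_comm,
    smul_smul, smul_add, smul_sub, smul_neg, neg_mul, mul_neg, neg_neg, neg_add, neg_sub]
  module

theorem MatId3 (hN : Nᵀ = -N) (hR : Rᵀ = -R) :
    EMat (A * B - B * A) (A * R + R * Aᵀ - B * N - N * Bᵀ)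
      = CMat A N * EMat B R - CMat B R * EMat A N
        + EMat B R * DMat A N - EMat A N * DMat B R := by
  simp only [CMat, DMat, EMat]
  simp only [map_sub, map_add, map_mul, φT, Matrix.transpose_sub, Matrix.transpose_add,
    Matrix.transpose_mul, Matrix.transpose_smul, Matrix.transpose_neg,
    Matrix.transpose_transpose, hNφ hN, hNφ hR]
  simp only [mul_add, add_mul, mul_sub, sub_mul, smul_mul_assoc, mul_smul_comm,
    smul_smul, smul_add, smul_sub, smul_neg, neg_mul, mul_neg, neg_neg, neg_add, neg_sub]
  module

theorem traceEq : ((EMat B R)ᵀ * EMat A N).trace = (EMat B R * (EMat A N)ᵀ).trace := by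
  rw [Matrix.trace_mul_comm, ← Matrix.trace_transpose, Matrix.transpose_mul,
    Matrix.transpose_transpose]

end anti
end Stmt19Aux


namespace Stmt19Aux
open ContinuousLinearMap

theorem liou_eq {F : Type*} [NormedAddCommGroup F] [InnerProductSpace ℂ F]
    [FiniteDimensional ℂ F] {n : ℕ} (w : Fin (2 * n) → F →L[ℂ] F)
    (A N : Matrix (Fin (2 * n)) (Fin (2 * n)) ℝ) :
    LiouMaj w A N = (4:ℂ)⁻¹ • (mulLeftRight ℂ (F →L[ℂ] F) (qOp w (CMat A N)) 1
      + mulLeftRight ℂ (F →L[ℂ] F) 1 (qOp w (DMat A N)) + sandOp w (EMat A N)) := by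
  rw [LiouMaj]
  congr 1
  rw [mlrq_left, mlrq_right, sandOp]
  rw [← Finset.sum_add_distrib, ← Finset.sum_add_distrib]
  refine Finset.sum_congr rfl fun j _ => ?_
  rw [← Finset.sum_add_distrib, ← Finset.sum_add_distrib]
  refine Finset.sum_congr rfl fun k _ => ?_
  rw [mul_eq_mlr]
  simp only [CMat, DMat, EMat, φ, RingHom.mapMatrix_apply, Matrix.map_apply,
    Matrix.sub_apply, Matrix.add_apply, Matrix.smul_apply, Matrix.neg_apply,
    Matrix.transpose_apply, smul_eq_mul, Complex.ofRealHom_eq_coe]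
  push_cast
  module

end Stmt19Aux

/-- for real `2n×2n` matrices `A`, `B` and real anti-symmetric `2n×2n`
matrices `N`, `R`, `[L(A, N), L(B, R)] = L([A, B], AR + RAᵀ − BN − NBᵀ)`. -/
theorem stmt19 {n : ℕ} (hn : 0 < n)
    {F : Type*} [NormedAddCommGroup F] [InnerProductSpace ℂ F] [FiniteDimensional ℂ F]
    (w : Fin (2 * n) → F →L[ℂ] F)
    (hsa : ∀ j, ContinuousLinearMap.adjoint (w j) = w j)
    (hww : ∀ j k, w j * w k + w k * w j = if j = k then 2 else 0)
    (A B N R : Matrix (Fin (2 * n)) (Fin (2 * n)) ℝ)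
    (hN : Nᵀ = -N) (hR : Rᵀ = -R) :
    LiouMaj w A N * LiouMaj w B R - LiouMaj w B R * LiouMaj w A N
      = LiouMaj w (A * B - B * A) (A * R + R * Aᵀ - B * N - N * Bᵀ) := by
  rw [Stmt19Aux.liou_eq w A N, Stmt19Aux.liou_eq w B R,
    Stmt19Aux.liou_eq w (A * B - B * A) (A * R + R * Aᵀ - B * N - N * Bᵀ),
    Stmt19Aux.MatId1 hN hR, Stmt19Aux.MatId2 hN hR, Stmt19Aux.MatId3 hN hR]
  exact Stmt19Aux.grand w hww (Stmt19Aux.CMat A N) (Stmt19Aux.DMat A N) (Stmt19Aux.EMat A N)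
    (Stmt19Aux.CMat B R) (Stmt19Aux.DMat B R) (Stmt19Aux.EMat B R)
    (Stmt19Aux.CMat_T hN) (Stmt19Aux.CMat_T hR) (Stmt19Aux.DMat_T hN) (Stmt19Aux.DMat_T hR)
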